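/- If G has a vertex v such that the induced subgraph G[V \ N[v]] has an isolated vertex, then every maximal independent set A containing v satisfies Int(A) ≠ ∅. -/

import Mathlib

open Finset

/-- A set of vertices is independent: no two of its vertices are adjacent. -/
def Indep {n : ℕ} (G : SimpleGraph (Fin n)) (A : Finset (Fin n)) : Prop :=
  ∀ u ∈ A, ∀ v ∈ A, ¬ G.Adj u v

instance {n : ℕ} (G : SimpleGraph (Fin n)) [DecidableRel G.Adj] (A : Finset (Fin n)) :
    Decidable (Indep G A) := by unfold Indep; infer_instance

/-- A maximal independent set. -/
def MaxIndep {n : ℕ} (G : SimpleGraph (Fin n)) (A : Finset (Fin n)) : Prop :=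
  Indep G A ∧ ∀ B, Indep G B → A ⊆ B → A = B

/-- Externally active vertices with respect to the independent set `A`:
vertices outside `A` adjacent to and greater than some vertex of `A`. -/
def ExtAct {n : ℕ} (G : SimpleGraph (Fin n)) [DecidableRel G.Adj] (A : Finset (Fin n)) :
    Finset (Fin n) :=
  univ.filter (fun v => v ∉ A ∧ ∃ a ∈ A, G.Adj v a ∧ a < v)

/-- The neighbours of `v` that can substitute `v` in `A` keeping independence. -/
def Subs {n : ℕ} (G : SimpleGraph (Fin n)) [DecidableRel G.Adj] (A : Finset (Fin n))
    (v : Fin n) : Finset (Fin n) :=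
  univ.filter (fun u => G.Adj v u ∧ Indep G (insert u (A.erase v)))

/-- Internally active vertices of `A`: vertices `v ∈ A` with `Subs v = ∅` or
`v` greater than every element of `Subs v`. -/
def IntAct {n : ℕ} (G : SimpleGraph (Fin n)) [DecidableRel G.Adj] (A : Finset (Fin n)) :
    Finset (Fin n) :=
  A.filter (fun v => ∀ u ∈ Subs G A v, u < v)

/-- The interval `[A;B]` of the Boolean lattice. -/
def Itv {n : ℕ} (A B : Finset (Fin n)) : Set (Finset (Fin n)) :=
  {X | A ⊆ X ∧ X ⊆ B}

/-
The isolated vertex `w` of `G[V \ N[v]]` has all its neighbours in `N(v)`. Since `A ∋ v` is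
independent, no neighbour of `w` lies in `A`, so maximality forces `w ∈ A`. A substitute `u` for
`w` would be adjacent to `v`, which stays in `(A \ {w}) ∪ {u}`; hence `Subs(w) = ∅` and `w ∈ Int(A)`.
-/

variable {n : ℕ} {G : SimpleGraph (Fin n)}

theorem Indep.insert {A : Finset (Fin n)} {w : Fin n} (hA : Indep G A)
    (hw : ∀ a ∈ A, ¬ G.Adj w a) : Indep G (insert w A) := by
  intro a ha b hb
  rcases mem_insert.mp ha with rfl | ha' <;> rcases mem_insert.mp hb with rfl | hb'
  · exact G.irrefl
  · exact hw b hb'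
  · exact fun h => hw a ha' h.symm
  · exact hA a ha' b hb'

theorem MaxIndep.mem_of_forall_not_adj {A : Finset (Fin n)} {w : Fin n} (hA : MaxIndep G A)
    (hw : ∀ a ∈ A, ¬ G.Adj w a) : w ∈ A := by
  rw [hA.2 _ (hA.1.insert hw) (subset_insert w A)]
  exact mem_insert_self w A

theorem subs_eq_empty_of_adj_imp_adj [DecidableRel G.Adj] {A : Finset (Fin n)} {v w : Fin n}
    (hvA : v ∈ A) (hwv : w ≠ v) (hw : ∀ u, G.Adj w u → G.Adj v u) : Subs G A w = ∅ := by
  refine eq_empty_of_forall_notMem fun u hu => ?_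
  obtain ⟨hwu, hind⟩ := (mem_filter.mp hu).2
  exact hind u (mem_insert_self u _) v (mem_insert_of_mem (mem_erase.mpr ⟨hwv.symm, hvA⟩))
    (hw u hwu).symm

theorem mem_intAct_of_adj_imp_adj [DecidableRel G.Adj] {A : Finset (Fin n)} {v w : Fin n}
    (hvA : v ∈ A) (hwA : w ∈ A) (hwv : w ≠ v) (hw : ∀ u, G.Adj w u → G.Adj v u) :
    w ∈ IntAct G A := by
  refine mem_filter.mpr ⟨hwA, fun u hu => ?_⟩
  simp [subs_eq_empty_of_adj_imp_adj hvA hwv hw] at hu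

/-- If `G[V \ N[v]]` has an isolated vertex then every maximal independent set
containing `v` has a nonempty set of internally active vertices. -/
theorem int_nonempty_of_isolated (n : ℕ) (G : SimpleGraph (Fin n)) [DecidableRel G.Adj]
    (v : Fin n)
    (hiso : ∃ w : Fin n, w ≠ v ∧ ¬ G.Adj v w ∧ ∀ u, G.Adj w u → u = v ∨ G.Adj v u) :
    ∀ A : Finset (Fin n), MaxIndep G A → v ∈ A → IntAct G A ≠ ∅ := by
  obtain ⟨w, hwv, hvw, hw⟩ := hiso
  have hN : ∀ u, G.Adj w u → G.Adj v u := fun u hwu =>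
    (hw u hwu).resolve_left fun huv => hvw (huv ▸ hwu.symm)
  intro A hA hvA
  have hwA : w ∈ A := hA.mem_of_forall_not_adj fun a ha hwa => hA.1 v hvA a ha (hN a hwa)
  exact ne_empty_of_mem (mem_intAct_of_adj_imp_adj hvA hwA hwv hN)
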